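/- arXiv:2101.04396 — 4 statements merged into one kernel-verified Lean document; each statement's English description precedes it below -/
import Mathlib

section
/- For every x in V, one has Ω(x) = (1/2)‖x‖_V if and only if ‖M_{x,λ}‖ = ‖x‖_V for every λ ∈ ℂ with |λ| = 1. -/
/-!
Setting: `A` is a C*-algebra and `V` is a Hilbert C*-module over `A`.
`WithCStarModule A (A × V)` is the Hilbert `A`-module `A ⊕ V`, with inner product
`⟪(a, y), (b, z)⟫ = a * b + ⟪y, z⟫` and norm `‖(a, y)‖ = ‖a * a + ⟪y, y⟫‖ ^ (1/2)`
(both provided by Mathlib).  For `x : V` and `lam : ℂ` with `|lam| = 1`, the operator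
`M_{x,lam} : A ⊕ V → A ⊕ V`, `(a, y) ↦ (conj lam • ⟪x, y⟫, lam • (x <• a))` is encoded
by a family `M` of continuous linear maps satisfying the predicate `IsM` below, and the
numerical radius is `numRadius M x = (1/2) * sup_{|lam| = 1} ‖M x lam‖`.
-/

open scoped RightActions InnerProductSpace

noncomputable section

variable {A V : Type*} [NonUnitalCStarAlgebra A] [PartialOrder A] [StarOrderedRing A]
  [NormedAddCommGroup V] [Module ℂ V] [SMul A V] [CStarModule A V] [CompleteSpace V]

/-- The element of the Hilbert `A`-module `A ⊕ V` with components `a : A` and `y : V`. -/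
def pairElem (a : A) (y : V) : WithCStarModule A (A × V) :=
  (WithCStarModule.equiv A (A × V)).symm (a, y)

/-- `IsM M` asserts that for every `x : V` and every unimodular `lam : ℂ`, the continuous
linear map `M x lam` is the operator `M_{x,lam} : (a, y) ↦ (conj lam • ⟪x, y⟫, lam • (x <• a))`
on `A ⊕ V`. -/
def IsM (M : V → ℂ → (WithCStarModule A (A × V) →L[ℂ] WithCStarModule A (A × V))) : Prop :=
  ∀ (x : V) (lam : ℂ), ‖lam‖ = 1 → ∀ (a : A) (y : V),
    M x lam (pairElem a y) = pairElem ((starRingEnd ℂ) lam • ⟪x, y⟫_A) (lam • (a • x))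

/-- The numerical radius `Ω(x) = (1/2) * sup_{|lam| = 1} ‖M_{x,lam}‖`. -/
def numRadius (M : V → ℂ → (WithCStarModule A (A × V) →L[ℂ] WithCStarModule A (A × V)))
    (x : V) : ℝ :=
  (1 / 2) * sSup ((fun lam : ℂ => ‖M x lam‖) '' {lam : ℂ | ‖lam‖ = 1})

namespace CStarModule

variable {E : Type*} [NormedAddCommGroup E] [Module ℂ E] [SMul A E] [CStarModule A E]

include A in
lemma norm_complex_smul (z : ℂ) (v : E) : ‖z • v‖ = ‖z‖ * ‖v‖ :=
  (normedSpaceCore A).norm_smul z v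

lemma norm_op_smul_le (a : A) (v : E) : ‖a • v‖ ≤ ‖a‖ * ‖v‖ := by
  rcases (norm_nonneg (a • v)).eq_or_lt with h0 | hpos
  · rw [← h0]; positivity
  have hsq : ‖a • v‖ * ‖a • v‖ ≤ ‖a‖ * ‖v‖ * ‖a • v‖ :=
    calc ‖a • v‖ * ‖a • v‖ = ‖a * ⟪a • v, v⟫_A‖ := by
          rw [← sq, norm_sq_eq (A := A), inner_op_smul_right]
      _ ≤ ‖a‖ * (‖a • v‖ * ‖v‖) := (norm_mul_le _ _).trans (by gcongr; exact norm_inner_le E)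
      _ = ‖a‖ * ‖v‖ * ‖a • v‖ := by ring
  exact le_of_mul_le_mul_right hsq hpos

end CStarModule

namespace IsM

omit [CompleteSpace V]

variable {M : V → ℂ → (WithCStarModule A (A × V) →L[ℂ] WithCStarModule A (A × V))}

lemma opNorm_le_two_mul (hM : IsM M) (x : V) {lam : ℂ} (hlam : ‖lam‖ = 1) :
    ‖M x lam‖ ≤ 2 * ‖x‖ := by
  refine ContinuousLinearMap.opNorm_le_bound _ (by positivity) fun v => ?_
  have hv : ‖v.1‖ ≤ ‖v‖ ∧ ‖v.2‖ ≤ ‖v‖ := max_le_iff.mp (WithCStarModule.max_le_prod_norm v)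
  calc ‖M x lam v‖ ≤ ‖(M x lam v).1‖ + ‖(M x lam v).2‖ :=
        WithCStarModule.prod_norm_le_norm_add _
    _ = ‖⟪x, v.2⟫_A‖ + ‖v.1 • x‖ := by
        rw [show v = pairElem v.1 v.2 from rfl, hM x lam hlam]
        simp only [pairElem, WithCStarModule.equiv_symm_fst, WithCStarModule.equiv_symm_snd,
          CStarModule.norm_complex_smul (A := A), hlam, RCLike.norm_conj, one_mul]
    _ ≤ ‖x‖ * ‖v.2‖ + ‖v.1‖ * ‖x‖ :=
        add_le_add (CStarModule.norm_inner_le V) (CStarModule.norm_op_smul_le v.1 x)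
    _ ≤ 2 * ‖x‖ * ‖v‖ := by nlinarith [norm_nonneg x]

lemma norm_le_opNorm (hM : IsM M) (x : V) {lam : ℂ} (hlam : ‖lam‖ = 1) :
    ‖x‖ ≤ ‖M x lam‖ := by
  rcases (norm_nonneg x).eq_or_lt with h0 | hpos
  · rw [← h0]; positivity
  have hfst : ‖(M x lam (pairElem 0 x)).1‖ = ‖x‖ * ‖x‖ := by
    rw [hM x lam hlam, pairElem, WithCStarModule.equiv_symm_fst, norm_smul, RCLike.norm_conj,
      hlam, one_mul, ← sq, CStarModule.norm_sq_eq (A := A)]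
  have hpair : ‖pairElem (0 : A) x‖ ≤ ‖x‖ := by
    simpa [pairElem] using WithCStarModule.prod_norm_le_norm_add (pairElem (0 : A) x)
  have hle : ‖x‖ * ‖x‖ ≤ ‖M x lam‖ * ‖x‖ :=
    calc ‖x‖ * ‖x‖ = ‖(M x lam (pairElem 0 x)).1‖ := hfst.symm
      _ ≤ ‖M x lam (pairElem 0 x)‖ := le_of_max_le_left (WithCStarModule.max_le_prod_norm _)
      _ ≤ ‖M x lam‖ * ‖pairElem (0 : A) x‖ := (M x lam).le_opNorm _
      _ ≤ ‖M x lam‖ * ‖x‖ := by gcongr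
  exact le_of_mul_le_mul_right hle hpos

end IsM

lemma csSup_image_eq_iff_forall_eq {ι β : Type*} [ConditionallyCompleteLattice β] {f : ι → β}
    {s : Set ι} {c : β} (hbdd : BddAbove (f '' s)) (hs : s.Nonempty) (hle : ∀ i ∈ s, c ≤ f i) :
    sSup (f '' s) = c ↔ ∀ i ∈ s, f i = c := by
  refine ⟨fun h i hi => le_antisymm (h ▸ le_csSup hbdd (Set.mem_image_of_mem f hi)) (hle i hi),
    fun h => le_antisymm (csSup_le (hs.image f) (Set.forall_mem_image.2 fun i hi => (h i hi).le))
      ?_⟩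
  obtain ⟨i, hi⟩ := hs
  exact (h i hi).ge.trans (le_csSup hbdd (Set.mem_image_of_mem f hi))

theorem stmt7 (M : V → ℂ → (WithCStarModule A (A × V) →L[ℂ] WithCStarModule A (A × V))) (hM : IsM M) (x : V) :
    numRadius M x = (1 / 2) * ‖x‖ ↔ ∀ lam : ℂ, ‖lam‖ = 1 → ‖M x lam‖ = ‖x‖ := by
  have hbdd : BddAbove ((fun lam : ℂ => ‖M x lam‖) '' {lam : ℂ | ‖lam‖ = 1}) :=
    ⟨2 * ‖x‖, Set.forall_mem_image.2 fun lam hlam => hM.opNorm_le_two_mul x hlam⟩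
  rw [numRadius, mul_right_inj' (by norm_num : (1 / 2 : ℝ) ≠ 0),
    csSup_image_eq_iff_forall_eq hbdd ⟨1, norm_one⟩ fun lam hlam => hM.norm_le_opNorm x hlam]
  rfl
end
end

section
/- For every a in A and x in V, one has Ω(xa + xa*) ≤ 2‖a + a*‖_A Ω(x). -/
/-!
Setting: `A` is a C*-algebra and `V` is a Hilbert C*-module over `A`.
`WithCStarModule (A × V)` is the Hilbert `A`-module `A ⊕ V`, with inner product
`⟪(a, y), (b, z)⟫ = a * b + ⟪y, z⟫` and norm `‖(a, y)‖ = ‖a * a + ⟪y, y⟫‖ ^ (1/2)`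
(both provided by Mathlib).  For `x : V` and `lam : ℂ` with `|lam| = 1`, the operator
`M_{x,lam} : A ⊕ V → A ⊕ V`, `(a, y) ↦ (conj lam • ⟪x, y⟫, lam • (x <• a))` is encoded
by a family `M` of continuous linear maps satisfying the predicate `IsM` below, and the
numerical radius is `numRadius M x = (1/2) * sup_{|lam| = 1} ‖M x lam‖`.
-/

open scoped RightActions InnerProductSpace

noncomputable section

variable {A V : Type*} [NonUnitalCStarAlgebra A] [PartialOrder A] [StarOrderedRing A]
  [NormedAddCommGroup V] [Module ℂ V] [SMul A V] [CStarModule A V] [CompleteSpace V]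

/-! The operator `M_{x,lam}` has norm exactly `‖x‖` for every unimodular `lam`: the phases cancel in
`⟪M z, M z⟫ = ⟪x, y⟫⟪y, x⟫ + b⟪x, x⟫b*` (for `z = (b, y)`), which the C⋆-valued Cauchy–Schwarz
inequality bounds by `‖x‖² ⟪z, z⟫`, while `z = (0, x)` is mapped to a vector whose first component
has norm `‖x‖²`. Hence `Ω(x) = ‖x‖ / 2`, and the inequality reduces to
`‖(a + a*) x‖ ≤ ‖a + a*‖ ‖x‖`. -/

namespace CStarModule

section general

variable {B E : Type*} [NonUnitalRing B] [StarRing B] [AddCommGroup E] [Module ℂ B]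
  [Module ℂ E] [StarModule ℂ B] [PartialOrder B] [SMul B E] [Norm B] [Norm E]
  [CStarModule B E]

/- `CStarModule` does not ask for `Module B E`; distributivity comes from nondegeneracy of the
inner product. -/
lemma add_smul (a b : B) (x : E) : (a + b) • x = a • x + b • x := by
  rw [← sub_eq_zero, ← inner_self (A := B)]
  simp only [inner_sub_left, inner_sub_right, inner_add_left, inner_add_right,
    inner_op_smul_left, inner_op_smul_right, star_add, add_mul, mul_add]
  abel

end general

section norm

variable {B E : Type*} [NonUnitalCStarAlgebra B] [PartialOrder B] [StarOrderedRing B]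
  [AddCommGroup E] [Module ℂ E] [SMul B E] [Norm E] [CStarModule B E]

lemma sq_norm_le_of_inner_self_le {x : E} {r : ℝ} (hr : 0 ≤ r) {b : B}
    (h : ⟪x, x⟫_B ≤ r • b) : ‖x‖ ^ 2 ≤ r * ‖b‖ := by
  calc ‖x‖ ^ 2 = ‖⟪x, x⟫_B‖ := norm_sq_eq B
    _ ≤ ‖r • b‖ := CStarAlgebra.norm_le_norm_of_nonneg_of_le inner_self_nonneg h
    _ = r * ‖b‖ := by rw [norm_smul, Real.norm_of_nonneg hr]

lemma inner_smul_self_le (a : B) (x : E) : ⟪a • x, a • x⟫_B ≤ ‖x‖ ^ 2 • (a * star a) := by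
  rw [inner_op_smul_left, inner_op_smul_right, norm_sq_eq B]
  exact CStarAlgebra.star_right_conjugate_le_norm_smul isSelfAdjoint_inner_self

lemma norm_smul_le (a : B) (x : E) : ‖a • x‖ ≤ ‖a‖ * ‖x‖ := by
  have hx := CStarModule.norm_nonneg B (x := x)
  refine (pow_le_pow_iff_left₀ (CStarModule.norm_nonneg B) (by positivity) two_ne_zero).mp ?_
  calc ‖a • x‖ ^ 2 ≤ ‖x‖ ^ 2 * ‖a * star a‖ :=
        sq_norm_le_of_inner_self_le (by positivity) (inner_smul_self_le a x)
    _ = (‖a‖ * ‖x‖) ^ 2 := by rw [CStarRing.norm_self_mul_star]; ring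

end norm

end CStarModule

section operator

omit [CompleteSpace V]

variable {M : V → ℂ → (WithCStarModule A (A × V) →L[ℂ] WithCStarModule A (A × V))}

lemma inner_self_pairElem (b : A) (y : V) :
    ⟪pairElem b y, pairElem b y⟫_A = b * star b + ⟪y, y⟫_A :=
  rfl

lemma norm_pairElem_zero_left (y : V) : ‖pairElem (0 : A) y‖ = ‖y‖ := by
  rw [CStarModule.norm_eq_sqrt_norm_inner_self (A := A), inner_self_pairElem, zero_mul, zero_add,
    ← CStarModule.norm_eq_sqrt_norm_inner_self]

lemma inner_self_pairElem_phase_le {lam : ℂ} (hlam : ‖lam‖ = 1) (x : V) (b : A) (y : V) :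
    ⟪pairElem ((starRingEnd ℂ) lam • ⟪x, y⟫_A) (lam • b • x),
      pairElem ((starRingEnd ℂ) lam • ⟪x, y⟫_A) (lam • b • x)⟫_A ≤
      ‖x‖ ^ 2 • ⟪pairElem b y, pairElem b y⟫_A := by
  have hphase : (starRingEnd ℂ) lam * lam = 1 := by
    rw [Complex.conj_mul', hlam]
    norm_num
  rw [inner_self_pairElem, inner_self_pairElem, smul_add, add_comm (_ • (b * star b)), star_smul,
    smul_mul_smul_comm, CStarModule.star_inner, CStarModule.inner_smul_left_complex,
    CStarModule.inner_smul_right_complex, smul_smul]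
  simp only [RCLike.star_def, starRingEnd_self_apply, hphase, one_smul]
  exact add_le_add CStarModule.inner_mul_inner_swap_le (CStarModule.inner_smul_self_le b x)

lemma IsM.norm_apply_le (hM : IsM M) {lam : ℂ} (hlam : ‖lam‖ = 1) (x : V)
    (z : WithCStarModule A (A × V)) : ‖M x lam z‖ ≤ ‖x‖ * ‖z‖ := by
  change ‖M x lam (pairElem z.1 z.2)‖ ≤ ‖x‖ * ‖pairElem z.1 z.2‖
  refine (pow_le_pow_iff_left₀ (norm_nonneg _) (by positivity) two_ne_zero).mp ?_
  rw [hM x lam hlam, mul_pow, CStarModule.norm_sq_eq A (x := pairElem z.1 z.2)]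
  exact CStarModule.sq_norm_le_of_inner_self_le (by positivity)
    (inner_self_pairElem_phase_le hlam x z.1 z.2)

lemma IsM.sq_norm_le_opNorm_mul_norm (hM : IsM M) {lam : ℂ} (hlam : ‖lam‖ = 1) (x : V) :
    ‖x‖ ^ 2 ≤ ‖M x lam‖ * ‖x‖ := by
  calc ‖x‖ ^ 2 = ‖(M x lam (pairElem 0 x)).1‖ := by
        rw [hM x lam hlam]
        change _ = ‖(starRingEnd ℂ) lam • ⟪x, x⟫_A‖
        rw [norm_smul, Complex.norm_conj, hlam, one_mul, CStarModule.norm_sq_eq A]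
    _ ≤ ‖M x lam (pairElem 0 x)‖ := (le_max_left _ _).trans (WithCStarModule.max_le_prod_norm _)
    _ ≤ ‖M x lam‖ * ‖x‖ := by
        simpa only [norm_pairElem_zero_left] using (M x lam).le_opNorm (pairElem 0 x)

lemma IsM.opNorm_eq (hM : IsM M) {lam : ℂ} (hlam : ‖lam‖ = 1) (x : V) : ‖M x lam‖ = ‖x‖ := by
  refine le_antisymm ((M x lam).opNorm_le_bound (norm_nonneg x) (hM.norm_apply_le hlam x)) ?_
  rcases (norm_nonneg x).eq_or_lt with hx | hx
  · exact hx ▸ (M x lam).opNorm_nonneg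
  · exact le_of_mul_le_mul_right (by simpa only [sq] using hM.sq_norm_le_opNorm_mul_norm hlam x) hx

lemma IsM.numRadius_eq (hM : IsM M) (x : V) : numRadius M x = ‖x‖ / 2 := by
  have : (fun lam : ℂ => ‖M x lam‖) '' {lam : ℂ | ‖lam‖ = 1} = {‖x‖} :=
    Set.eq_singleton_iff_unique_mem.mpr
      ⟨⟨1, norm_one, hM.opNorm_eq norm_one x⟩, fun _ ⟨_, hlam, h⟩ => h ▸ hM.opNorm_eq hlam x⟩
  rw [numRadius, this, csSup_singleton, one_div_mul_eq_div]

end operator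

theorem stmt9 (M : V → ℂ → (WithCStarModule A (A × V) →L[ℂ] WithCStarModule A (A × V))) (hM : IsM M) (a : A) (x : V) :
    numRadius M (a • x + star a • x) ≤ 2 * ‖a + star a‖ * numRadius M x := by
  rw [hM.numRadius_eq, hM.numRadius_eq, ← CStarModule.add_smul]
  have hsmul := CStarModule.norm_smul_le (a + star a) x
  have hprod : 0 ≤ ‖a + star a‖ * ‖x‖ := by positivity
  linarith
end
end

section
/- For every a in A and x in V, one has Ω(xa − xa*) ≤ 2‖a − a*‖_A Ω(x). -/
/-!
Setting: `A` is a C*-algebra and `V` is a Hilbert C*-module over `A`.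
`WithCStarModule A (A × V)` is the Hilbert `A`-module `A ⊕ V`, with inner product
`⟪(a, y), (b, z)⟫ = a * b + ⟪y, z⟫` and norm `‖(a, y)‖ = ‖a * a + ⟪y, y⟫‖ ^ (1/2)`
(both provided by Mathlib).  For `x : V` and `lam : ℂ` with `|lam| = 1`, the operator
`M_{x,lam} : A ⊕ V → A ⊕ V`, `(a, y) ↦ (conj lam • ⟪x, y⟫, lam • (x <• a))` is encoded
by a family `M` of continuous linear maps satisfying the predicate `IsM` below, and the
numerical radius is `numRadius M x = (1/2) * sup_{|lam| = 1} ‖M x lam‖`.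
-/

open scoped RightActions InnerProductSpace

noncomputable section

variable {A V : Type*} [NonUnitalCStarAlgebra A] [PartialOrder A] [StarOrderedRing A]
  [NormedAddCommGroup V] [Module ℂ V] [SMul A V] [CStarModule A V] [CompleteSpace V]

/-!
The numerical radius is equivalent to the norm: `‖x‖ / 2 ≤ Ω(x) ≤ ‖x‖`. The upper bound comes
from Cauchy–Schwarz and `‖a • x‖ ≤ ‖a‖ ‖x‖`, the lower one from `M_{x,1} (0, x) = (⟪x, x⟫, 0)`.
The module action is additive in the scalar, so `a • x - star a • x = (a - star a) • x`, whose
norm is at most `‖a - star a‖ ‖x‖ ≤ 2 ‖a - star a‖ Ω(x)`.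
-/

section CStarModule

variable {B E : Type*}

/-- Additivity of the action in the scalar is not an axiom of `CStarModule`, but it follows from
faithfulness of the inner product. -/
theorem CStarModule.sub_smul [NonUnitalRing B] [StarRing B] [Module ℂ B] [StarModule ℂ B]
    [PartialOrder B] [AddCommGroup E] [Module ℂ E] [SMul B E] [Norm B] [Norm E] [CStarModule B E]
    (a b : B) (x : E) : (a - b) • x = a • x - b • x := by
  rw [← sub_eq_zero, ← CStarModule.inner_self (A := B)]
  simp only [CStarModule.inner_sub_right, CStarModule.inner_op_smul_right]
  noncomm_ring

theorem CStarModule.zero_smul [NonUnitalRing B] [StarRing B] [Module ℂ B] [StarModule ℂ B]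
    [PartialOrder B] [AddCommGroup E] [Module ℂ E] [SMul B E] [Norm B] [Norm E] [CStarModule B E]
    (x : E) : (0 : B) • x = 0 := by
  simpa using CStarModule.sub_smul (0 : B) 0 x

theorem CStarModule.norm_smul_le_s11 [NonUnitalCStarAlgebra B] [PartialOrder B] [AddCommGroup E]
    [Module ℂ E] [SMul B E] [Norm E] [CStarModule B E] (a : B) (x : E) :
    ‖a • x‖ ≤ ‖a‖ * ‖x‖ := by
  refine le_of_sq_le_sq ?_ (mul_nonneg (norm_nonneg a) (CStarModule.norm_nonneg B))
  calc ‖a • x‖ ^ 2 = ‖a * ⟪x, x⟫_B * star a‖ := by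
        rw [CStarModule.norm_sq_eq B, CStarModule.inner_op_smul_left,
          CStarModule.inner_op_smul_right, mul_assoc]
    _ ≤ ‖a‖ * ‖⟪x, x⟫_B‖ * ‖star a‖ := norm_mul₃_le
    _ = (‖a‖ * ‖x‖) ^ 2 := by rw [norm_star, ← CStarModule.norm_sq_eq B]; ring

end CStarModule

section NumRadius

omit [CompleteSpace V]

variable {M : V → ℂ → (WithCStarModule A (A × V) →L[ℂ] WithCStarModule A (A × V))}

theorem opNorm_le_two_mul_norm (hM : IsM M) (x : V) {lam : ℂ} (hlam : ‖lam‖ = 1) :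
    ‖M x lam‖ ≤ 2 * ‖x‖ := by
  refine ContinuousLinearMap.opNorm_le_bound _ (by positivity) fun v => ?_
  have hv₁ : ‖v.1‖ ≤ ‖v‖ := (le_max_left _ _).trans (WithCStarModule.max_le_prod_norm v)
  have hv₂ : ‖v.2‖ ≤ ‖v‖ := (le_max_right _ _).trans (WithCStarModule.max_le_prod_norm v)
  calc ‖M x lam v‖
      = ‖pairElem ((starRingEnd ℂ) lam • ⟪x, v.2⟫_A) (lam • (v.1 • x))‖ := by
        rw [← hM x lam hlam]; rfl
    _ ≤ ‖(starRingEnd ℂ) lam • ⟪x, v.2⟫_A‖ + ‖lam • (v.1 • x)‖ :=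
        WithCStarModule.prod_norm_le_norm_add _
    _ = ‖⟪x, v.2⟫_A‖ + ‖v.1 • x‖ := by
        rw [norm_smul, (CStarModule.normedSpaceCore A).norm_smul, Complex.norm_conj, hlam,
          one_mul, one_mul]
    _ ≤ ‖x‖ * ‖v.2‖ + ‖v.1‖ * ‖x‖ :=
        add_le_add (CStarModule.norm_inner_le V) (CStarModule.norm_smul_le_s11 _ _)
    _ ≤ ‖x‖ * ‖v‖ + ‖v‖ * ‖x‖ := by gcongr
    _ = 2 * ‖x‖ * ‖v‖ := by ring

theorem norm_le_opNorm_one (hM : IsM M) (x : V) : ‖x‖ ≤ ‖M x 1‖ := by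
  rcases eq_or_ne x 0 with rfl | hx
  · exact (norm_zero (E := V)).trans_le (M 0 1).opNorm_nonneg
  have hMx : M x 1 (pairElem 0 x) = pairElem ⟪x, x⟫_A 0 := by
    simpa [CStarModule.zero_smul] using hM x 1 norm_one 0 x
  have key : ‖x‖ * ‖x‖ ≤ ‖M x 1‖ * ‖x‖ :=
    calc ‖x‖ * ‖x‖ = ‖⟪x, x⟫_A‖ := by rw [← CStarModule.norm_sq_eq A, sq]
      _ ≤ ‖pairElem ⟪x, x⟫_A (0 : V)‖ :=
        (le_max_left _ _).trans (WithCStarModule.max_le_prod_norm (pairElem _ _))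
      _ ≤ ‖M x 1‖ * ‖pairElem (0 : A) x‖ := hMx ▸ (M x 1).le_opNorm _
      _ ≤ ‖M x 1‖ * ‖x‖ := by
        gcongr
        simpa [pairElem] using WithCStarModule.prod_norm_le_norm_add (pairElem (0 : A) x)
  exact le_of_mul_le_mul_right key (norm_pos_iff.mpr hx)

theorem bddAbove_opNorm_image (hM : IsM M) (x : V) :
    BddAbove ((fun lam : ℂ => ‖M x lam‖) '' {lam : ℂ | ‖lam‖ = 1}) :=
  ⟨2 * ‖x‖, Set.forall_mem_image.2 fun _ hlam => opNorm_le_two_mul_norm hM x hlam⟩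

theorem numRadius_le_norm (hM : IsM M) (x : V) : numRadius M x ≤ ‖x‖ := by
  have hsup : sSup ((fun lam : ℂ => ‖M x lam‖) '' {lam : ℂ | ‖lam‖ = 1}) ≤ 2 * ‖x‖ :=
    csSup_le ⟨_, Set.mem_image_of_mem _ (norm_one (α := ℂ))⟩
      (Set.forall_mem_image.2 fun _ hlam => opNorm_le_two_mul_norm hM x hlam)
  unfold numRadius
  linarith

theorem norm_le_two_mul_numRadius (hM : IsM M) (x : V) : ‖x‖ ≤ 2 * numRadius M x := by
  have hsup : ‖M x 1‖ ≤ sSup ((fun lam : ℂ => ‖M x lam‖) '' {lam : ℂ | ‖lam‖ = 1}) :=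
    le_csSup (bddAbove_opNorm_image hM x) (Set.mem_image_of_mem _ (norm_one (α := ℂ)))
  unfold numRadius
  linarith [norm_le_opNorm_one hM x]

end NumRadius

theorem stmt11 (M : V → ℂ → (WithCStarModule A (A × V) →L[ℂ] WithCStarModule A (A × V))) (hM : IsM M) (a : A) (x : V) :
    numRadius M (a • x - star a • x) ≤ 2 * ‖a - star a‖ * numRadius M x := by
  calc numRadius M (a • x - star a • x)
      ≤ ‖(a - star a) • x‖ := CStarModule.sub_smul a (star a) x ▸ numRadius_le_norm hM _
    _ ≤ ‖a - star a‖ * ‖x‖ := CStarModule.norm_smul_le_s11 _ _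
    _ ≤ ‖a - star a‖ * (2 * numRadius M x) := by gcongr; exact norm_le_two_mul_numRadius hM x
    _ = 2 * ‖a - star a‖ * numRadius M x := by ring
end
end

section
/- Let B be a C*-algebra and let a, b ∈ B. Then the spectral radius of a + b satisfies r(a + b) ≤ (1/2)(‖a‖ + ‖b‖ + sqrt((‖a‖ − ‖b‖)² + 4‖ab‖)); the right-hand side is the operator norm of the 2×2 complex matrix [[‖a‖, ‖ab‖^{1/2}],[‖ab‖^{1/2}, ‖b‖]]. -/
/-!
With `u = !![a, 0; t⁻¹, 0]` and `v = !![1, t b; 0, 0]` in `2 × 2` matrices over `B` one has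
`v u = diag (a + b, 0)`, hence `r(a + b) ≤ r(v u) = r(u v) ≤ ‖u v‖∞`, and
`u v = !![a, t ab; t⁻¹, b]` has row sums `‖a‖ + t ‖ab‖` and `t⁻¹ + ‖b‖`. When `‖ab‖ > 0` one
value of `t` makes both row sums equal to the larger root `ρ` of `(z - ‖a‖)(z - ‖b‖) = ‖ab‖`;
when `ab = 0` one perturbs `‖ab‖` and passes to the limit. The matrix
`!![‖a‖, √‖ab‖; √‖ab‖, ‖b‖]` is self-adjoint with eigenvalues `ρ` and `‖a‖ + ‖b‖ - ρ`, so its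
norm is its spectral radius `ρ`.
-/

open Filter Topology
open scoped ENNReal NNReal

section SpectralRadius

variable {𝕜 A : Type*} [NormedField 𝕜] [Ring A] [Algebra 𝕜 A]

theorem spectralRadius_mul_comm_le (a b : A) :
    spectralRadius 𝕜 (a * b) ≤ spectralRadius 𝕜 (b * a) := by
  refine iSup₂_le fun k hk => ?_
  rcases eq_or_ne k 0 with rfl | hk₀
  · simp
  · have hk' : k ∈ spectrum 𝕜 (b * a) \ {0} :=
      spectrum.nonzero_mul_comm (𝕜 := 𝕜) a b ▸ ⟨hk, hk₀⟩
    exact le_iSup₂ (f := fun k _ => (‖k‖₊ : ℝ≥0∞)) k hk'.1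

theorem spectralRadius_mul_comm (a b : A) :
    spectralRadius 𝕜 (a * b) = spectralRadius 𝕜 (b * a) :=
  (spectralRadius_mul_comm_le a b).antisymm (spectralRadius_mul_comm_le b a)

theorem spectralRadius_le_of_spectrum_subset {B : Type*} [Ring B] [Algebra 𝕜 B] {a : A} {b : B}
    (h : spectrum 𝕜 a ⊆ spectrum 𝕜 b) : spectralRadius 𝕜 a ≤ spectralRadius 𝕜 b :=
  biSup_mono fun _ hk => h hk

theorem spectralRadius_eq_nnnorm_of_forall_norm_le {a : A} {z₀ : 𝕜} (hz₀ : z₀ ∈ spectrum 𝕜 a)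
    (h : ∀ z ∈ spectrum 𝕜 a, ‖z‖ ≤ ‖z₀‖) : spectralRadius 𝕜 a = ‖z₀‖₊ :=
  le_antisymm (iSup₂_le fun z hz => by exact_mod_cast h z hz) (le_iSup₂ (α := ℝ≥0∞) z₀ hz₀)

end SpectralRadius

namespace Matrix

variable {n A : Type*} [Fintype n] [DecidableEq n]

theorem isUnit_apply_of_isUnit_diagonal [Semiring A] {d : n → A} (h : IsUnit (diagonal d))
    (i : n) : IsUnit (d i) := by
  obtain ⟨Y, hdY, hYd⟩ := isUnit_iff_exists.mp h
  refine isUnit_iff_exists.mpr ⟨Y i i, ?_, ?_⟩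
  · simpa using congrFun (congrFun hdY i) i
  · simpa using congrFun (congrFun hYd i) i

theorem spectrum_apply_subset_spectrum_diagonal {R : Type*} [CommSemiring R] [Ring A]
    [Algebra R A] (d : n → A) (i : n) : spectrum R (d i) ⊆ spectrum R (diagonal d) := by
  intro r hr hunit
  rw [resolventSet, Set.mem_ofPred_eq, algebraMap_eq_diagonal, Pi.algebraMap_def,
    diagonal_sub] at hunit
  exact hr (isUnit_apply_of_isUnit_diagonal hunit i)

theorem mem_spectrum_fin_two_iff {K : Type*} [Field K] (M : Matrix (Fin 2) (Fin 2) K) (z : K) :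
    z ∈ spectrum K M ↔ (z - M 0 0) * (z - M 1 1) - M 0 1 * M 1 0 = 0 := by
  rw [spectrum.mem_iff, isUnit_iff_isUnit_det, isUnit_iff_ne_zero, not_not, det_fin_two]
  simp [algebraMap_matrix_apply]

end Matrix

theorem spectralRadius_add_le_spectralRadius_fin_two {𝕜 A : Type*} [NormedField 𝕜] [Ring A]
    [Algebra 𝕜 A] (a b : A) {t : 𝕜} (ht : t ≠ 0) :
    spectralRadius 𝕜 (a + b) ≤ spectralRadius 𝕜 !![a, t • (a * b); t⁻¹ • 1, b] := by
  have hvu : !![1, t • b; 0, 0] * !![a, 0; t⁻¹ • 1, 0] = Matrix.diagonal ![a + b, 0] := by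
    ext i j
    fin_cases i <;> fin_cases j <;> simp [smul_smul, ht]
  have huv : !![a, 0; t⁻¹ • 1, 0] * !![1, t • b; 0, 0] = !![a, t • (a * b); t⁻¹ • 1, b] := by
    simp [smul_smul, ht]
  have hdiag := Matrix.spectrum_apply_subset_spectrum_diagonal (R := 𝕜) ![a + b, 0] 0
  rw [Matrix.cons_val_zero] at hdiag
  calc spectralRadius 𝕜 (a + b) ≤ spectralRadius 𝕜 (Matrix.diagonal ![a + b, 0]) :=
        spectralRadius_le_of_spectrum_subset hdiag
    _ = spectralRadius 𝕜 (!![a, 0; t⁻¹ • 1, 0] * !![1, t • b; 0, 0]) := by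
        rw [← hvu, spectralRadius_mul_comm]
    _ = _ := by rw [huv]

section LinftyOpNorm

attribute [local instance] Matrix.linftyOpNormedRing Matrix.linftyOpNormedAlgebra

theorem Matrix.linfty_opNorm_fin_two {A : Type*} [NormedRing A] (M : Matrix (Fin 2) (Fin 2) A) :
    ‖M‖ = max (‖M 0 0‖ + ‖M 0 1‖) (‖M 1 0‖ + ‖M 1 1‖) := by
  simp [Matrix.linfty_opNorm_def, Fin.univ_succ]

theorem spectralRadius_add_le_max_norm {𝕜 A : Type*} [NontriviallyNormedField 𝕜] [NormedRing A]
    [NormedAlgebra 𝕜 A] [CompleteSpace A] [NormOneClass A] (a b : A) {t : 𝕜} (ht : t ≠ 0) :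
    spectralRadius 𝕜 (a + b) ≤ ENNReal.ofReal (max (‖a‖ + ‖t‖ * ‖a * b‖) (‖t‖⁻¹ + ‖b‖)) := by
  -- instance search does not see that the `L∞` operator norm induces the product uniformity
  have : @CompleteSpace (Matrix (Fin 2) (Fin 2) A)
      (Matrix.linftyOpNormedRing (α := A)).toUniformSpace :=
    inferInstanceAs (CompleteSpace (Fin 2 → Fin 2 → A))
  calc spectralRadius 𝕜 (a + b) ≤ spectralRadius 𝕜 !![a, t • (a * b); t⁻¹ • 1, b] :=
        spectralRadius_add_le_spectralRadius_fin_two a b ht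
    _ ≤ ENNReal.ofReal ‖!![a, t • (a * b); t⁻¹ • 1, b]‖ := by
        rw [ofReal_norm]
        exact spectrum.spectralRadius_le_nnnorm _
    _ = _ := by
        rw [Matrix.linfty_opNorm_fin_two]
        simp [norm_smul]

end LinftyOpNorm

/-- The larger root of `(z - x) * (z - y) = c`, i.e. the largest eigenvalue of
`!![x, √c; √c, y]`. -/
noncomputable def perronRoot (x y c : ℝ) : ℝ := 1 / 2 * (x + y + √((x - y) ^ 2 + 4 * c))

section PerronRoot

variable {x y c : ℝ}

theorem perronRoot_sub_mul_sub (hc : 0 ≤ c) :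
    (perronRoot x y c - x) * (perronRoot x y c - y) = c := by
  have h := Real.sq_sqrt (by positivity : 0 ≤ (x - y) ^ 2 + 4 * c)
  unfold perronRoot
  linear_combination h / 4

theorem lt_perronRoot (hc : 0 < c) : x < perronRoot x y c := by
  have : |x - y| < √((x - y) ^ 2 + 4 * c) := by
    rw [← Real.sqrt_sq_eq_abs]
    exact Real.sqrt_lt_sqrt (sq_nonneg _) (by linarith)
  unfold perronRoot
  linarith [le_abs_self (x - y)]

theorem abs_add_sub_perronRoot_le (hx : 0 ≤ x) (hy : 0 ≤ y) :
    |x + y - perronRoot x y c| ≤ perronRoot x y c := by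
  have := Real.sqrt_nonneg ((x - y) ^ 2 + 4 * c)
  unfold perronRoot
  rw [abs_le]
  constructor <;> linarith

theorem exists_add_mul_eq_perronRoot (hc : 0 < c) :
    ∃ t > 0, x + t * c = perronRoot x y c ∧ t⁻¹ + y = perronRoot x y c := by
  have hx : 0 < perronRoot x y c - x := sub_pos.2 (lt_perronRoot hc)
  refine ⟨(perronRoot x y c - x) / c, by positivity, by field_simp; ring, ?_⟩
  rw [inv_div, ← eq_sub_iff_add_eq, div_eq_iff hx.ne']
  linear_combination -perronRoot_sub_mul_sub (x := x) (y := y) hc.le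

theorem continuous_perronRoot : Continuous (perronRoot x y) := by
  unfold perronRoot
  fun_prop

end PerronRoot

theorem spectralRadius_add_le_perronRoot {𝕜 A : Type*} [RCLike 𝕜] [NormedRing A]
    [NormedAlgebra 𝕜 A] [CompleteSpace A] [NormOneClass A] (a b : A) :
    spectralRadius 𝕜 (a + b) ≤ ENNReal.ofReal (perronRoot ‖a‖ ‖b‖ ‖a * b‖) := by
  have hδ : ∀ δ > 0,
      spectralRadius 𝕜 (a + b) ≤ ENNReal.ofReal (perronRoot ‖a‖ ‖b‖ (‖a * b‖ + δ)) := by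
    intro δ hδ
    obtain ⟨t, ht, hrow₀, hrow₁⟩ :=
      exists_add_mul_eq_perronRoot (x := ‖a‖) (y := ‖b‖) (by positivity : 0 < ‖a * b‖ + δ)
    refine (spectralRadius_add_le_max_norm a b (t := (t : 𝕜)) (by simpa using ht.ne')).trans
      (ENNReal.ofReal_le_ofReal ?_)
    rw [RCLike.norm_ofReal, abs_of_pos ht]
    refine max_le ?_ hrow₁.le
    rw [← hrow₀]
    gcongr
    linarith
  have hlim : Tendsto (fun δ => ENNReal.ofReal (perronRoot ‖a‖ ‖b‖ (‖a * b‖ + δ))) (𝓝[>] 0)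
      (𝓝 (ENNReal.ofReal (perronRoot ‖a‖ ‖b‖ ‖a * b‖))) := by
    refine Tendsto.mono_left ?_ nhdsWithin_le_nhds
    exact (ENNReal.continuous_ofReal.comp
      (continuous_perronRoot.comp (continuous_const.add continuous_id))).tendsto' 0 _ (by simp)
  exact ge_of_tendsto hlim (eventually_nhdsWithin_of_forall hδ)

open scoped Matrix.Norms.L2Operator in
theorem norm_fin_two_eq_perronRoot {x y c : ℝ} (hx : 0 ≤ x) (hy : 0 ≤ y) (hc : 0 ≤ c) :
    ‖!![(x : ℂ), (√c : ℂ); (√c : ℂ), (y : ℂ)]‖ = perronRoot x y c := by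
  set N : Matrix (Fin 2) (Fin 2) ℂ := !![(x : ℂ), (√c : ℂ); (√c : ℂ), (y : ℂ)]
  set ρ := perronRoot x y c
  have hN : IsSelfAdjoint N := by
    ext i j
    fin_cases i <;> fin_cases j <;> simp [N, Matrix.star_apply]
  have hroots : ∀ z, z ∈ spectrum ℂ N ↔ z = ρ ∨ z = (x + y - ρ : ℝ) := by
    intro z
    have hquad : ((ρ - x) * (ρ - y) : ℂ) = √c * √c := by
      exact_mod_cast (perronRoot_sub_mul_sub hc).trans (Real.mul_self_sqrt hc).symm
    have hfactor : (z - x) * (z - y) - √c * √c = (z - ρ) * (z - (x + y - ρ : ℝ)) := by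
      push_cast
      linear_combination hquad
    rw [Matrix.mem_spectrum_fin_two_iff]
    simp only [N, Matrix.of_apply, Matrix.cons_val', Matrix.cons_val_zero, Matrix.cons_val_one,
      Matrix.empty_val', Matrix.cons_val_fin_one]
    rw [hfactor, mul_eq_zero, sub_eq_zero, sub_eq_zero]
  have hρ : |x + y - ρ| ≤ ρ := abs_add_sub_perronRoot_le hx hy
  have hρ₀ : 0 ≤ ρ := (abs_nonneg _).trans hρ
  have hr : spectralRadius ℂ N = ‖(ρ : ℂ)‖₊ := by
    refine spectralRadius_eq_nnnorm_of_forall_norm_le ((hroots ρ).2 (.inl rfl)) fun z hz => ?_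
    rcases (hroots z).1 hz with rfl | rfl
    · rfl
    · rwa [Complex.norm_real, Complex.norm_real, Real.norm_of_nonneg hρ₀, Real.norm_eq_abs]
  have hnn : ‖N‖₊ = ‖(ρ : ℂ)‖₊ := by
    exact_mod_cast hN.spectralRadius_eq_nnnorm.symm.trans hr
  rw [← coe_nnnorm, hnn, coe_nnnorm, Complex.norm_real, Real.norm_of_nonneg hρ₀]

open scoped Matrix.Norms.L2Operator

/-- Spectral radius inequality for sums of elements in a C*-algebra: `r(a + b)` is at most the
operator norm of the `2 × 2` complex matrix `!![‖a‖, ‖a*b‖^(1/2); ‖a*b‖^(1/2), ‖b‖]`, which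
equals `(1/2) * (‖a‖ + ‖b‖ + sqrt((‖a‖ - ‖b‖)^2 + 4‖a*b‖))`. -/
theorem stmt12 {B : Type*} [CStarAlgebra B] (a b : B) :
    spectralRadius ℂ (a + b) ≤
      ENNReal.ofReal
        ((1 / 2) * (‖a‖ + ‖b‖ + Real.sqrt ((‖a‖ - ‖b‖) ^ 2 + 4 * ‖a * b‖))) ∧
    ‖(!![(‖a‖ : ℂ), (Real.sqrt ‖a * b‖ : ℂ);
        (Real.sqrt ‖a * b‖ : ℂ), (‖b‖ : ℂ)] : Matrix (Fin 2) (Fin 2) ℂ)‖ =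
      (1 / 2) * (‖a‖ + ‖b‖ + Real.sqrt ((‖a‖ - ‖b‖) ^ 2 + 4 * ‖a * b‖)) := by
  refine ⟨?_, norm_fin_two_eq_perronRoot (norm_nonneg a) (norm_nonneg b) (norm_nonneg (a * b))⟩
  rcases subsingleton_or_nontrivial B with hB | hB
  · simp [spectrum.SpectralRadius.of_subsingleton]
  · exact spectralRadius_add_le_perronRoot a b
end
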